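/- arXiv:math/0304271 — 2 statements merged into one kernel-verified Lean document; each statement's English description precedes it below -/
import Mathlib

section
/- Let c1 < c2 < ⋯ < cn be real numbers which are alternately labeled as maxima and minima such that c1 is a minimum and cn is a maximum in the following sense: define a function a : {1, …, n-1} → ℤ by a(i) = (number of j ≤ i labeled 'minimum') − (number of j ≤ i labeled 'maximum'), assumed positive for all i. If r_{i_1}, …, r_{i_k} are the indices i where position i is a local maximum of the sequence a (i.e., c_i is labeled minimum and c_{i+1} labeled maximum) with values a_{i_l}, and r_{j_1}, …, r_{j_{k-1}} are the indices where a has a local minimum (c_i labeled maximum, c_{i+1} labeled minimum) with values b_{j_l}, then the sum ∑_{i=1}^{n-1} 2·a(i) equals 2·∑_{l=1}^{k} a_{i_l}² − 2·∑_{l=1}^{k-1} b_{j_l}². -/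
private lemma tele_aux (f : ℕ → ℤ) (m : ℕ) :
    ∀ n, m ≤ n → ∑ i ∈ Finset.Ico m n, (f (i + 1) - f i) = f n - f m := by
  intro n
  induction n with
  | zero => intro h; interval_cases m; simp
  | succ k ih =>
    intro h
    rcases Nat.lt_or_ge m (k + 1) with h' | h'
    · have hm : m ≤ k := by omega
      rw [Finset.sum_Ico_succ_top hm, ih hm]; ring
    · have hm : m = k + 1 := by omega
      simp [hm]

/-- Lemma 6.2 combinatorics: a unit-step walk `a` with `a 0 = a n = 0` that is
strictly positive at interior times.  The width `∑ 2·a i` over interior levels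
equals twice the sum of squares over local maxima (thick levels) minus twice
the sum of squares over local minima (thin levels). -/
theorem width_thick_thin (n : ℕ) (hn : 0 < n) (a : ℕ → ℤ)
    (h0 : a 0 = 0) (hend : a n = 0)
    (hpos : ∀ i, 1 ≤ i → i < n → 0 < a i)
    (hstep : ∀ i, i < n → a (i + 1) = a i + 1 ∨ a (i + 1) = a i - 1) :
    ∑ i ∈ Finset.Ico 1 n, 2 * a i =
      2 * ∑ i ∈ (Finset.Ico 1 n).filter
            (fun i => a (i - 1) < a i ∧ a (i + 1) < a i), (a i) ^ 2
      - 2 * ∑ i ∈ (Finset.Ico 1 n).filter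
            (fun i => a i < a (i - 1) ∧ a i < a (i + 1)), (a i) ^ 2 := by
  by_cases hn1 : n = 1
  · subst hn1; simp
  have hn2 : 2 ≤ n := by omega
  have ha1 : a 1 = 1 := by
    have h1 : a 1 = a 0 + 1 ∨ a 1 = a 0 - 1 := hstep 0 hn
    have h2 := hpos 1 le_rfl (by omega)
    omega
  set F : ℕ → ℤ := fun i => (a i - a (i - 1)) * (a i) ^ 2 with hF
  have key : ∀ i ∈ Finset.Ico 1 n,
      (2 * a i
        - ((if a (i - 1) < a i ∧ a (i + 1) < a i then 2 * (a i) ^ 2 else 0)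
          - (if a i < a (i - 1) ∧ a i < a (i + 1) then 2 * (a i) ^ 2 else 0))
        + (a (i + 1) - a i)) = F (i + 1) - F i := by
    intro i hi
    simp only [Finset.mem_Ico] at hi
    have h1 := hstep (i - 1) (by omega)
    rw [Nat.sub_add_cancel hi.1] at h1
    have h2 := hstep i hi.2
    simp only [hF]
    have e1 : i + 1 - 1 = i := rfl
    rw [e1]
    rcases h1 with h1 | h1
    · have e3 : a (i - 1) = a i - 1 := by omega
      rcases h2 with h2 | h2 <;> simp only [h2, e3] <;>
        split_ifs <;> (first | ring1 | (exfalso; omega))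
    · have e3 : a (i - 1) = a i + 1 := by omega
      rcases h2 with h2 | h2 <;> simp only [h2, e3] <;>
        split_ifs <;> (first | ring1 | (exfalso; omega))
  have tsum := Finset.sum_congr rfl key
  rw [tele_aux F 1 n (by omega)] at tsum
  have tA : ∑ i ∈ Finset.Ico 1 n, (a (i + 1) - a i) = a n - a 1 :=
    tele_aux a 1 n (by omega)
  have hFn : F n = 0 := by simp [hF, hend]
  have hF1 : F 1 = 1 := by simp [hF, h0, ha1]
  rw [Finset.sum_add_distrib, Finset.sum_sub_distrib, Finset.sum_sub_distrib,
    tA, hFn, hF1, hend, ha1] at tsum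
  rw [Finset.mul_sum, Finset.mul_sum, Finset.sum_filter, Finset.sum_filter]
  linarith
end

section
/- Let a_0, a_1, …, a_n be integers with a_0 = a_n = 0 and |a_i − a_{i−1}| = 1 for all 1 ≤ i ≤ n. Then ∑_{i=1}^{n} (a_{i−1} + a_i) = 2·∑_{i ∈ T} a_i² − 2·∑_{i ∈ t} a_i², where T = {i : 0 < i < n, a_{i−1} < a_i and a_i > a_{i+1}} and t = {i : 0 < i < n, a_{i−1} > a_i and a_i < a_{i+1}}. -/
/-! With `d i = a i - a (i - 1) = ±1`, each summand is `a (i-1) + a i = d i * (a i ^ 2 - a (i-1) ^ 2)`.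
Summation by parts moves the differences onto `d`; the boundary terms vanish because
`a 0 = a n = 0`, and `d i - d (i + 1)` is `2` at a local maximum, `-2` at a local minimum
and `0` elsewhere. -/

open Finset

theorem sum_Icc_mul_sub_pred_by_parts {R : Type*} [CommRing R] (f g : ℕ → R) (n : ℕ) :
    ∑ i ∈ Icc 1 n, f i * (g i - g (i - 1)) =
      ∑ i ∈ Icc 1 n, (f i - f (i + 1)) * g i + f (n + 1) * g n - f 1 * g 0 := by
  induction n with
  | zero => simp
  | succ n ih =>
    rw [sum_Icc_succ_top (by omega), sum_Icc_succ_top (by omega), ih, Nat.add_sub_cancel]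
    ring

theorem add_eq_mul_sq_sub_sq_of_sq_sub_eq_one {R : Type*} [CommRing R] {x y : R}
    (h : (y - x) ^ 2 = 1) : x + y = (y - x) * (y ^ 2 - x ^ 2) := by
  linear_combination (-(x + y)) * h

theorem sub_sub_sub_mul_eq_of_unit_steps {R : Type*} [CommRing R] [LinearOrder R]
    [IsStrictOrderedRing R] {x y z : R} (c : R)
    (hxy : y - x = 1 ∨ y - x = -1) (hyz : z - y = 1 ∨ z - y = -1) :
    (y - x - (z - y)) * c =
      2 * (if x < y ∧ y > z then c else 0) - 2 * (if x > y ∧ y < z then c else 0) := by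
  grind

/-- The discrete identity behind Lemma 6.2: for a unit-step integer walk with
`a 0 = a n = 0`, the sum `∑ (a (i-1) + a i)` equals twice the sum of squares of
the values at local maxima minus twice the sum of squares at local minima. -/
theorem width_eq_squares (n : ℕ) (a : ℕ → ℤ)
    (h0 : a 0 = 0) (hend : a n = 0)
    (hstep : ∀ i, 1 ≤ i → i ≤ n → a i - a (i - 1) = 1 ∨ a i - a (i - 1) = -1) :
    ∑ i ∈ Finset.Icc 1 n, (a (i - 1) + a i) =
      2 * ∑ i ∈ (Finset.Ico 1 n).filter
            (fun i => a (i - 1) < a i ∧ a i > a (i + 1)), (a i) ^ 2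
      - 2 * ∑ i ∈ (Finset.Ico 1 n).filter
            (fun i => a (i - 1) > a i ∧ a i < a (i + 1)), (a i) ^ 2 := by
  set d : ℕ → ℤ := fun i => a i - a (i - 1) with hd
  have hsum : ∀ i ∈ Icc 1 n, a (i - 1) + a i = d i * (a i ^ 2 - a (i - 1) ^ 2) := fun i hi =>
    add_eq_mul_sq_sub_sq_of_sq_sub_eq_one
      (sq_eq_one_iff.mpr (hstep i (mem_Icc.1 hi).1 (mem_Icc.1 hi).2))
  have hturn : ∀ i ∈ Ico 1 n, (d i - d (i + 1)) * a i ^ 2 =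
      2 * (if a (i - 1) < a i ∧ a i > a (i + 1) then a i ^ 2 else 0)
        - 2 * (if a (i - 1) > a i ∧ a i < a (i + 1) then a i ^ 2 else 0) := by
    intro i hi
    have hin := mem_Ico.1 hi
    have hout := hstep (i + 1) (by omega) (by omega)
    rw [Nat.add_sub_cancel] at hout
    simpa only [hd, Nat.add_sub_cancel] using
      sub_sub_sub_mul_eq_of_unit_steps (a i ^ 2) (hstep i hin.1 hin.2.le) hout
  calc ∑ i ∈ Icc 1 n, (a (i - 1) + a i)
      = ∑ i ∈ Icc 1 n, d i * (a i ^ 2 - a (i - 1) ^ 2) := sum_congr rfl hsum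
    _ = ∑ i ∈ Icc 1 n, (d i - d (i + 1)) * a i ^ 2 := by
      rw [sum_Icc_mul_sub_pred_by_parts, h0, hend]; ring
    _ = ∑ i ∈ Ico 1 n, (d i - d (i + 1)) * a i ^ 2 := by
      refine (sum_subset Ico_subset_Icc_self fun i hi hi' => ?_).symm
      obtain rfl : i = n := by simp only [mem_Icc, mem_Ico] at hi hi'; omega
      rw [hend]; ring
    _ = _ := by
      rw [sum_congr rfl hturn, sum_sub_distrib, ← mul_sum, ← mul_sum, sum_filter, sum_filter]
end
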